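/- The three-valued immediate consequence operator Ψ_D, which maps a three-valued interpretation 𝓘 to the three-valued interpretation assigning to each shape name s with defining rule s ← φ the three-valued evaluation of φ in 𝓘, is a consistent approximator of the two-valued operator T_D. -/

import Mathlib

/-- The three truth values: false, unknown, true. -/
inductive TV where
  | f | u | t
deriving DecidableEq

/-- Rank of a truth value in the truth order `f ≤ u ≤ t`. -/
def TV.rank : TV → ℕ
  | .f => 0
  | .u => 1
  | .t => 2

/-- Kleene negation. -/
def TV.neg : TV → TV
  | .f => .t
  | .u => .u
  | .t => .f

/-- Kleene conjunction (minimum in the truth order). -/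
def TV.conj (a b : TV) : TV := if a.rank ≤ b.rank then a else b

/-- The precision order on truth values: `u` is least precise, `t` and `f`
are maximally precise. -/
def TV.pprec (a b : TV) : Prop := a = TV.u ∨ a = b

/-- Path expressions over property names `P`. -/
inductive PathE (P : Type*) where
  | prop (p : P)
  | inv (E : PathE P)
  | union (E₁ E₂ : PathE P)
  | comp (E₁ E₂ : PathE P)
  | star (E : PathE P)
  | opt (E : PathE P)

/-- Shapes over node names `N`, property names `P`, and shape names `S`. -/
inductive Shape (N P S : Type*) where
  | top
  | name (s : S)
  | singleton (c : N)
  | and (φ ψ : Shape N P S)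
  | neg (φ : Shape N P S)
  | geq (n : ℕ) (E : PathE P) (φ : Shape N P S)
  | eq (E₁ E₂ : PathE P)
  | disj (E₁ E₂ : PathE P)
  | closed (Q : Set P)

variable {N P S Δ : Type*}

/-- Semantics of a path expression in the fixed graph-interpretation given by
the property interpretation `pI`. -/
def evalPath (pI : P → Δ → Δ → Prop) : PathE P → Δ → Δ → Prop
  | .prop p => pI p
  | .inv E => fun a b => evalPath pI E b a
  | .union E₁ E₂ => fun a b => evalPath pI E₁ a b ∨ evalPath pI E₂ a b
  | .comp E₁ E₂ => fun a b => ∃ c, evalPath pI E₁ a c ∧ evalPath pI E₂ c b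
  | .star E => Relation.ReflTransGen (evalPath pI E)
  | .opt E => fun a b => evalPath pI E a b ∨ a = b

/-- A set has at least `n` elements. -/
def AtLeast (n : ℕ) (X : Set Δ) : Prop :=
  ∃ g : Fin n → Δ, Function.Injective g ∧ ∀ i, g i ∈ X

open Classical in
/-- Three-valued (Kleene) evaluation of a shape in a three-valued
interpretation `I : S → Δ → TV` of the shape names, over the fixed
graph-interpretation given by `cI` and `pI`. -/
noncomputable def eval3 (cI : N → Δ) (pI : P → Δ → Δ → Prop) :
    Shape N P S → (S → Δ → TV) → Δ → TV
  | .top, _, _ => TV.t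
  | .name s, I, a => I s a
  | .singleton c, _, a => if a = cI c then TV.t else TV.f
  | .and φ ψ, I, a => (eval3 cI pI φ I a).conj (eval3 cI pI ψ I a)
  | .neg φ, I, a => (eval3 cI pI φ I a).neg
  | .geq n E φ, I, a =>
      if AtLeast n {b | evalPath pI E a b ∧ eval3 cI pI φ I b = TV.t} then TV.t
      else if AtLeast n {b | evalPath pI E a b ∧ eval3 cI pI φ I b ≠ TV.f} then TV.u
      else TV.f
  | .eq E₁ E₂, _, a =>
      if ∀ b, evalPath pI E₁ a b ↔ evalPath pI E₂ a b then TV.t else TV.f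
  | .disj E₁ E₂, _, a =>
      if ∀ b, ¬(evalPath pI E₁ a b ∧ evalPath pI E₂ a b) then TV.t else TV.f
  | .closed Q, _, a =>
      if ∀ p ∉ Q, ∀ b, ¬ pI p a b then TV.t else TV.f

/-- Two-valued evaluation of a shape in an interpretation `σ : S → Set Δ` of
the shape names, over the fixed graph-interpretation given by `cI` and `pI`. -/
def eval2 (cI : N → Δ) (pI : P → Δ → Δ → Prop) :
    Shape N P S → (S → Set Δ) → Set Δ
  | .top, _ => Set.univ
  | .name s, σ => σ s
  | .singleton c, _ => {cI c}
  | .and φ ψ, σ => eval2 cI pI φ σ ∩ eval2 cI pI ψ σ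
  | .neg φ, σ => (eval2 cI pI φ σ)ᶜ
  | .geq n E φ, σ => {a | AtLeast n {b | evalPath pI E a b ∧ b ∈ eval2 cI pI φ σ}}
  | .eq E₁ E₂, _ => {a | ∀ b, evalPath pI E₁ a b ↔ evalPath pI E₂ a b}
  | .disj E₁ E₂, _ => {a | ∀ b, ¬(evalPath pI E₁ a b ∧ evalPath pI E₂ a b)}
  | .closed Q, _ => {a | ∀ p ∉ Q, ∀ b, ¬ pI p a b}

open Classical in
/-- The exact three-valued interpretation corresponding to a two-valued
interpretation `σ`. -/
noncomputable def exactTV (σ : S → Set Δ) : S → Δ → TV :=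
  fun s a => if a ∈ σ s then TV.t else TV.f

/-- The two-valued immediate consequence operator `T_D` of a rule set `D`. -/
def TD (cI : N → Δ) (pI : P → Δ → Δ → Prop) (D : S → Shape N P S) :
    (S → Set Δ) → S → Set Δ :=
  fun σ s => eval2 cI pI (D s) σ

/-- The three-valued immediate consequence operator `Ψ_D` of a rule set `D`. -/
noncomputable def PsiD (cI : N → Δ) (pI : P → Δ → Δ → Prop) (D : S → Shape N P S) :
    (S → Δ → TV) → S → Δ → TV :=
  fun I s => eval3 cI pI (D s) I

/-!
Both halves go by structural induction on the shape. The only non-trivial case is the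
counting constructor `geq`: refining the interpretation can only enlarge the set of
successors that are certainly in `φ` and shrink the set of those that are possibly in `φ`,
so a `t` or `f` verdict is preserved. On exact interpretations every subshape evaluates to
`t` or `f`, and Kleene's connectives restrict to the Boolean ones.
-/

namespace TV

lemma pprec_refl (a : TV) : a.pprec a := Or.inr rfl

lemma pprec.eq_of_ne_u {a b : TV} (h : a.pprec b) (ha : a ≠ .u) : a = b :=
  h.resolve_left ha

lemma conj_pprec_conj {a a' b b' : TV} (ha : a.pprec a') (hb : b.pprec b') :
    (a.conj b).pprec (a'.conj b') := by
  cases a <;> cases a' <;> cases b <;> cases b' <;> simp_all [conj, pprec, rank]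

lemma neg_pprec_neg {a a' : TV} (h : a.pprec a') : a.neg.pprec a'.neg := by
  cases a <;> cases a' <;> simp_all [neg, pprec]

lemma conj_ite_ite (p q : Prop) [Decidable p] [Decidable q] :
    (if p then t else f).conj (if q then t else f) = if p ∧ q then t else f := by
  by_cases hp : p <;> by_cases hq : q <;> simp [hp, hq, conj, rank]

lemma neg_ite (p : Prop) [Decidable p] : (if p then t else f).neg = if ¬p then t else f := by
  by_cases hp : p <;> simp [hp, neg]

end TV

lemma AtLeast.mono {n : ℕ} {X Y : Set Δ} (hXY : X ⊆ Y) : AtLeast n X → AtLeast n Y :=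
  fun ⟨g, hg, hgX⟩ => ⟨g, hg, fun i => hXY (hgX i)⟩

open Classical in
lemma pprec_ite_atLeast {n : ℕ} {T U T' U' : Set Δ} (hT : T ⊆ T') (hU : U' ⊆ U)
    (hTU' : T' ⊆ U') :
    (if AtLeast n T then TV.t else if AtLeast n U then TV.u else TV.f).pprec
      (if AtLeast n T' then TV.t else if AtLeast n U' then TV.u else TV.f) := by
  by_cases hnT : AtLeast n T
  · simp [hnT, hnT.mono hT, TV.pprec_refl]
  by_cases hnU : AtLeast n U
  · simp [hnT, hnU, TV.pprec]
  have hnU' : ¬AtLeast n U' := fun h => hnU (h.mono hU)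
  have hnT' : ¬AtLeast n T' := fun h => hnU' (h.mono hTU')
  simp [hnT, hnU, hnT', hnU', TV.pprec_refl]

section Evaluation

variable (cI : N → Δ) (pI : P → Δ → Δ → Prop)

lemma eval3_pprec_eval3 {I I' : S → Δ → TV} (h : ∀ s a, (I s a).pprec (I' s a))
    (φ : Shape N P S) (a : Δ) : (eval3 cI pI φ I a).pprec (eval3 cI pI φ I' a) := by
  induction φ generalizing a with
  | name s => exact h s a
  | and φ ψ ihφ ihψ => exact TV.conj_pprec_conj (ihφ a) (ihψ a)
  | neg φ ih => exact TV.neg_pprec_neg (ih a)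
  | geq n E φ ih =>
    refine pprec_ite_atLeast ?_ ?_ ?_
    · rintro b ⟨hEb, hb⟩
      exact ⟨hEb, ((ih b).eq_of_ne_u (by simp [hb])).symm.trans hb⟩
    · rintro b ⟨hEb, hb⟩
      refine ⟨hEb, fun hf => hb ?_⟩
      exact ((ih b).eq_of_ne_u (by simp [hf])).symm.trans hf
    · rintro b ⟨hEb, hb⟩
      exact ⟨hEb, by simp [hb]⟩
  | _ => exact TV.pprec_refl _

open Classical in
lemma eval3_exactTV (σ : S → Set Δ) (φ : Shape N P S) (a : Δ) :
    eval3 cI pI φ (exactTV σ) a = if a ∈ eval2 cI pI φ σ then TV.t else TV.f := by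
  induction φ generalizing a with
  | and φ ψ ihφ ihψ => simp only [eval3, eval2, ihφ, ihψ, TV.conj_ite_ite, Set.mem_inter_iff]
  | neg φ ih => simp only [eval3, eval2, ih, TV.neg_ite, Set.mem_compl_iff]
  | geq n E φ ih =>
    have hcert : {b | evalPath pI E a b ∧ eval3 cI pI φ (exactTV σ) b = TV.t}
        = {b | evalPath pI E a b ∧ b ∈ eval2 cI pI φ σ} := by
      ext b; by_cases hb : b ∈ eval2 cI pI φ σ <;> simp [ih b, hb]
    have hposs : {b | evalPath pI E a b ∧ eval3 cI pI φ (exactTV σ) b ≠ TV.f}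
        = {b | evalPath pI E a b ∧ b ∈ eval2 cI pI φ σ} := by
      ext b; by_cases hb : b ∈ eval2 cI pI φ σ <;> simp [ih b, hb]
    by_cases hn : AtLeast n {b | evalPath pI E a b ∧ b ∈ eval2 cI pI φ σ} <;>
      simp [eval3, eval2, hcert, hposs, hn]
  | _ => simp only [eval3, eval2, exactTV, Set.mem_univ, Set.mem_singleton_iff, Set.mem_ofPred_eq,
      if_true] <;> congr

end Evaluation

/-- `Ψ_D` is a consistent approximator of `T_D`: it is `≤_p`-monotone and
coincides with `T_D` on exact interpretations. -/
theorem stmt_16 (cI : N → Δ) (pI : P → Δ → Δ → Prop) (D : S → Shape N P S) :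
    (∀ I I' : S → Δ → TV, (∀ s a, (I s a).pprec (I' s a)) →
      ∀ s a, ((PsiD cI pI D I) s a).pprec ((PsiD cI pI D I') s a)) ∧
    (∀ σ : S → Set Δ, PsiD cI pI D (exactTV σ) = exactTV (TD cI pI D σ)) :=
  ⟨fun _ _ h s => eval3_pprec_eval3 cI pI h (D s),
    fun σ => funext fun s => funext fun a => eval3_exactTV cI pI σ (D s) a⟩
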